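/- Let a > 0 and r₂ > 0, and define f : [0,∞) → [0,∞) by f(r) = a⁻¹(1 − e^{−ar}) for 0 ≤ r ≤ r₂ and f(r) = a⁻¹(1 − e^{−a r₂}) + (2r₂)⁻¹ e^{−a r₂} (r² − r₂²) for r > r₂. Then for all r ≥ 0: f(r) ≥ (2r₂)⁻¹ e^{−a r₂} · min(2 r₂², 1) · r². -/

import Mathlib

open Real

noncomputable section

/-- The concave-then-quadratic modified distance function used in reflection-coupling
arguments: `f(r) = a⁻¹(1 − e^{−ar})` for `r ≤ r₂` and
`f(r) = a⁻¹(1 − e^{−a r₂}) + (2r₂)⁻¹ e^{−a r₂}(r² − r₂²)` for `r > r₂`. -/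
def modDist (a r₂ r : ℝ) : ℝ :=
  if r ≤ r₂ then a⁻¹ * (1 - Real.exp (-(a * r)))
  else a⁻¹ * (1 - Real.exp (-(a * r₂))) + (2 * r₂)⁻¹ * Real.exp (-(a * r₂)) * (r ^ 2 - r₂ ^ 2)

/-- `1 - e^{-x} ≥ x e^{-x}` for all real `x`. -/
lemma aux_one_sub_exp (x : ℝ) : x * Real.exp (-x) ≤ 1 - Real.exp (-x) := by
  have h := Real.add_one_le_exp x
  have hpos : 0 < Real.exp (-x) := Real.exp_pos _
  have h2 : (x + 1) * Real.exp (-x) ≤ Real.exp x * Real.exp (-x) :=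
    mul_le_mul_of_nonneg_right h hpos.le
  rw [← Real.exp_add, add_neg_cancel, Real.exp_zero] at h2
  nlinarith

/-- The modified distance function dominates the squared distance:
`f(r) ≥ (2r₂)⁻¹ e^{−a r₂} min(2 r₂², 1) r²` for all `r ≥ 0`. -/
theorem modDist_dominates_sq (a r₂ : ℝ) (ha : 0 < a) (hr₂ : 0 < r₂) :
    ∀ r : ℝ, 0 ≤ r →
      (2 * r₂)⁻¹ * Real.exp (-(a * r₂)) * min (2 * r₂ ^ 2) 1 * r ^ 2 ≤ modDist a r₂ r := by
  intro r hr
  set E := Real.exp (-(a * r₂)) with hEdef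
  have hE₂ : 0 < E := Real.exp_pos _
  have hmin1 : min (2 * r₂ ^ 2) 1 ≤ 1 := min_le_right _ _
  have hminnn : 0 ≤ min (2 * r₂ ^ 2) 1 := le_min (by positivity) one_pos.le
  have hCpos : (0:ℝ) < (2 * r₂)⁻¹ * E := by positivity
  -- reduce min to 1
  have hm : (2 * r₂)⁻¹ * E * min (2 * r₂ ^ 2) 1 * r ^ 2 ≤ (2 * r₂)⁻¹ * E * r ^ 2 := by
    nlinarith [mul_le_mul_of_nonneg_right
      (mul_le_mul_of_nonneg_left hmin1 hCpos.le) (sq_nonneg r)]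
  refine hm.trans ?_
  have hkey : r₂ * E ≤ a⁻¹ * (1 - E) := by
    have h0 := aux_one_sub_exp (a * r₂)
    rw [le_inv_mul_iff₀ ha]
    nlinarith
  unfold modDist
  split_ifs with h
  · -- r ≤ r₂
    have h1 : a * r * Real.exp (-(a * r)) ≤ 1 - Real.exp (-(a * r)) := aux_one_sub_exp (a * r)
    have h2 : E ≤ Real.exp (-(a * r)) := Real.exp_le_exp.mpr (by nlinarith)
    have h3 : a * r * E ≤ 1 - Real.exp (-(a * r)) := by
      nlinarith [mul_le_mul_of_nonneg_left h2 (by positivity : (0:ℝ) ≤ a * r)]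
    have h4 : r ^ 2 ≤ r * r₂ := by nlinarith
    -- (2r₂)⁻¹ E r² ≤ E r ≤ a⁻¹ (1 - e^{-ar})
    have h5 : (2 * r₂)⁻¹ * E * r ^ 2 ≤ E * r := by
      have hq : (2 * r₂)⁻¹ * r ^ 2 ≤ r := by
        rw [inv_mul_le_iff₀ (by positivity)]
        nlinarith
      nlinarith [mul_le_mul_of_nonneg_left hq hE₂.le]
    refine h5.trans ?_
    rw [le_inv_mul_iff₀ ha]
    nlinarith
  · -- r > r₂
    push_neg at h
    have hc : (2 * r₂)⁻¹ * E * r₂ ^ 2 ≤ a⁻¹ * (1 - E) := by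
      have heq : (2 * r₂)⁻¹ * E * r₂ ^ 2 = r₂ * E / 2 := by field_simp
      rw [heq]; nlinarith
    nlinarith
end
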